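/- arXiv:2306.14520 — 6 statements merged into one kernel-verified Lean document; each statement's English description precedes it below -/
import Mathlib

section
/- For positive integers A and B, real numbers ρ₁ > 0 and ρ₂, …, ρ_A ≥ 0, the ratio (∑_{i=1}^{A} ρ_i) / (min_{s=1,…,A} (∑_{i=1}^{s-1} ρ_i + B·ρ_s)) is at least 1 - (1 - 1/B)^A. -/
/-!
Write `S s = ρ 1 + ⋯ + ρ s` and let `m` be the minimum in the denominator. For every `s`,
`m ≤ S (s - 1) + B ρ s` says `ρ s ≥ (m - S (s - 1)) / B`, so the gap `m - S s` shrinks at least by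
the factor `1 - 1/B` at each step. Hence `m - S A ≤ m (1 - 1/B) ^ A`, i.e. `S A ≥ m (1 - (1 - 1/B) ^ A)`.
-/

open Finset

theorem sub_le_mul_one_sub_inv_pow {S : ℕ → ℝ} {m b : ℝ} (hb : 1 ≤ b) {N : ℕ}
    (h : ∀ n < N, m ≤ S n + b * (S (n + 1) - S n)) :
    m - S N ≤ (m - S 0) * (1 - 1 / b) ^ N := by
  induction N with
  | zero => simp
  | succ n ih =>
    have hb0 : 0 < b := zero_lt_one.trans_le hb
    have hq : 0 ≤ 1 - 1 / b := sub_nonneg.mpr (div_le_one_of_le₀ hb hb0.le)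
    have hstep : m - S (n + 1) ≤ (m - S n) * (1 - 1 / b) := by
      have hgap : (m - S n) / b ≤ S (n + 1) - S n := by
        rw [div_le_iff₀ hb0]
        linarith [h n n.lt_succ_self]
      have : (m - S n) * (1 - 1 / b) = (m - S n) - (m - S n) / b := by ring
      linarith
    calc m - S (n + 1) ≤ (m - S n) * (1 - 1 / b) := hstep
      _ ≤ (m - S 0) * (1 - 1 / b) ^ n * (1 - 1 / b) :=
        mul_le_mul_of_nonneg_right (ih fun k hk => h k (hk.trans n.lt_succ_self)) hq
      _ = (m - S 0) * (1 - 1 / b) ^ (n + 1) := by ring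

theorem single_le_sum_Icc_one {ρ : ℕ → ℝ} {A s : ℕ} (hρ : ∀ i ∈ Icc 1 A, 0 ≤ ρ i)
    (hs : s ∈ Icc 1 A) : ρ 1 ≤ ∑ i ∈ Icc 1 s, ρ i := by
  rw [mem_Icc] at hs
  exact single_le_sum (fun i hi => hρ i (Icc_subset_Icc_right hs.2 hi))
    (mem_Icc.mpr ⟨le_rfl, hs.1⟩)

theorem stmt_0 (A B : ℕ) (hA : 0 < A) (hB : 0 < B) (ρ : ℕ → ℝ)
    (hρ1 : 0 < ρ 1) (hρ : ∀ i, 2 ≤ i → i ≤ A → 0 ≤ ρ i) :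
    (∑ i ∈ Finset.Icc 1 A, ρ i) /
      ((Finset.Icc 1 A).inf' (Finset.nonempty_Icc.mpr hA)
        (fun s => (∑ i ∈ Finset.Icc 1 (s - 1), ρ i) + (B : ℝ) * ρ s))
      ≥ 1 - (1 - 1 / (B : ℝ)) ^ A := by
  set m := (Icc 1 A).inf' (nonempty_Icc.mpr hA)
    (fun s => (∑ i ∈ Icc 1 (s - 1), ρ i) + (B : ℝ) * ρ s)
  have hB1 : (1 : ℝ) ≤ B := by exact_mod_cast hB
  have hρ_nonneg : ∀ i ∈ Icc 1 A, 0 ≤ ρ i := fun i hi => by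
    rcases (mem_Icc.mp hi).1.eq_or_lt with rfl | h
    exacts [hρ1.le, hρ i h (mem_Icc.mp hi).2]
  have hsum_succ (s : ℕ) : ∑ i ∈ Icc 1 (s + 1), ρ i = ∑ i ∈ Icc 1 s, ρ i + ρ (s + 1) :=
    sum_Icc_succ_top (Nat.le_add_left 1 s) ρ
  have hm_le : ∀ n < A, m ≤ ∑ i ∈ Icc 1 n, ρ i +
      B * (∑ i ∈ Icc 1 (n + 1), ρ i - ∑ i ∈ Icc 1 n, ρ i) := fun n hn => by
    rw [hsum_succ, add_sub_cancel_left]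
    exact inf'_le (fun s => (∑ i ∈ Icc 1 (s - 1), ρ i) + (B : ℝ) * ρ s)
      (mem_Icc.mpr ⟨Nat.le_add_left 1 n, hn⟩)
  -- each term of the minimum dominates `S s ≥ ρ 1`, because `B ≥ 1`
  have hm_pos : 0 < m := by
    refine (lt_inf'_iff _).mpr fun s hs => ?_
    obtain ⟨n, rfl⟩ := Nat.exists_eq_add_of_lt (mem_Icc.mp hs).1
    have hterm := le_mul_of_one_le_left (hρ_nonneg _ hs) hB1
    have hS := single_le_sum_Icc_one hρ_nonneg hs
    simp only [zero_add, Nat.add_sub_cancel, hsum_succ] at hterm hS ⊢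
    linarith
  have hgap := sub_le_mul_one_sub_inv_pow hB1 hm_le
  rw [Icc_eq_empty_of_lt zero_lt_one, sum_empty, sub_zero] at hgap
  rw [ge_iff_le, le_div_iff₀ hm_pos]
  linarith
end

section
/- For positive integers A and B, real numbers ρ₁ > 0 and ρ₂, …, ρ_A ≥ 0, we have (∑_{i=1}^{A} ρ_i) ≥ (1 - e^{-A/B}) · min_{s=1,…,A} (∑_{i=1}^{s-1} ρ_i + B·ρ_s). -/
/-! Let `m` be the minimum and `S s = ρ 1 + ⋯ + ρ s`. Since `m ≤ S s + B ρ (s+1)`, we get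
`B S (s+1) ≥ (B - 1) S s + m`, so by induction `S s ≥ m (1 - (1 - 1/B)^s)`; finally
`(1 - 1/B)^A ≤ e^{-A/B}` and `m ≥ 0`. -/

open Finset

theorem mul_one_sub_inv_pow_le_sum_Icc {b : ℝ} (hb : 1 ≤ b) (ρ : ℕ → ℝ) (m : ℝ) (n : ℕ)
    (hm : ∀ s ∈ Icc 1 n, m ≤ (∑ i ∈ Icc 1 (s - 1), ρ i) + b * ρ s) :
    m * (1 - (1 - b⁻¹) ^ n) ≤ ∑ i ∈ Icc 1 n, ρ i := by
  induction n with
  | zero => simp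
  | succ n ih =>
    have hprev := ih fun s hs => hm s (Icc_subset_Icc_right n.le_succ hs)
    have hlast : m ≤ (∑ i ∈ Icc 1 n, ρ i) + b * ρ (n + 1) := by
      simpa using hm (n + 1) (by simp)
    have hb0 : b ≠ 0 := by positivity
    rw [sum_Icc_succ_top (by omega), pow_succ]
    have hstep := mul_le_mul_of_nonneg_left hprev (sub_nonneg.mpr hb)
    have hbq : b * (m * (1 - (1 - b⁻¹) ^ n * (1 - b⁻¹)))
        = m + (b - 1) * (m * (1 - (1 - b⁻¹) ^ n)) := by
      field_simp
      ring
    refine le_of_mul_le_mul_left ?_ (by linarith : (0 : ℝ) < b)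
    linarith

theorem one_sub_inv_pow_le_exp {b : ℝ} (hb : 1 ≤ b) (n : ℕ) :
    (1 - b⁻¹) ^ n ≤ Real.exp (-(n : ℝ) / b) := calc
  (1 - b⁻¹) ^ n ≤ Real.exp (-b⁻¹) ^ n := by
    gcongr
    · exact sub_nonneg.mpr (inv_le_one_of_one_le₀ hb)
    · linarith [Real.add_one_le_exp (-b⁻¹)]
  _ = Real.exp (-(n : ℝ) / b) := by
    rw [← Real.exp_nat_mul]
    ring_nf

theorem stmt_2 (A B : ℕ) (hA : 0 < A) (hB : 0 < B) (ρ : ℕ → ℝ)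
    (hρ1 : 0 < ρ 1) (hρ : ∀ i, 2 ≤ i → i ≤ A → 0 ≤ ρ i) :
    (∑ i ∈ Finset.Icc 1 A, ρ i) ≥
      (1 - Real.exp (-(A : ℝ) / (B : ℝ))) *
        ((Finset.Icc 1 A).inf' (Finset.nonempty_Icc.mpr hA)
          (fun s => (∑ i ∈ Finset.Icc 1 (s - 1), ρ i) + (B : ℝ) * ρ s)) := by
  set m := (Icc 1 A).inf' (nonempty_Icc.mpr hA)
    (fun s => (∑ i ∈ Icc 1 (s - 1), ρ i) + (B : ℝ) * ρ s)
  have hB1 : (1 : ℝ) ≤ B := by exact_mod_cast hB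
  have hρ_nonneg : ∀ i ∈ Icc 1 A, 0 ≤ ρ i := by
    intro i hi
    rcases (mem_Icc.mp hi).1.eq_or_lt with rfl | h
    · exact hρ1.le
    · exact hρ i h (mem_Icc.mp hi).2
  have hm : 0 ≤ m := le_inf' _ _ fun s hs => by
    have hsub : Icc 1 (s - 1) ⊆ Icc 1 A := Icc_subset_Icc_right (by grind)
    exact add_nonneg (sum_nonneg fun i hi => hρ_nonneg i (hsub hi))
      (mul_nonneg B.cast_nonneg (hρ_nonneg s hs))
  calc (1 - Real.exp (-(A : ℝ) / B)) * m ≤ m * (1 - (1 - (B : ℝ)⁻¹) ^ A) := by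
        nlinarith [one_sub_inv_pow_le_exp hB1 A]
    _ ≤ ∑ i ∈ Icc 1 A, ρ i :=
        mul_one_sub_inv_pow_le_sum_Icc hB1 ρ m A fun s hs => inf'_le _ hs
end

section
/- If f : (k+1)^E → ℝ≥0 is k-submodular, then for any x ⪯ y in (k+1)^E, f(y) - f(x) ≤ ∑_{e ∈ P(y) \ P(x)} Δ_{e, y_e} f(x). -/
open Finset

/-- Join `⊔` on `(k+1)^E`, where a `k`-tuple of pairwise disjoint subsets of `E`
is represented as a function `E → Option (Fin k)`. -/
def ksup {E : Type*} {k : ℕ} (x y : E → Option (Fin k)) : E → Option (Fin k) :=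
  fun e => match x e, y e with
  | none, b => b
  | some i, none => some i
  | some i, some j => if i = j then some i else none

/-- Meet `⊓` on `(k+1)^E`. -/
def kinf {E : Type*} {k : ℕ} (x y : E → Option (Fin k)) : E → Option (Fin k) :=
  fun e => match x e, y e with
  | some i, some j => if i = j then some i else none
  | _, _ => none

/-- The partial order `x ⪯ y` : `X_i ⊆ Y_i` for all `i`. -/
def kle {E : Type*} {k : ℕ} (x y : E → Option (Fin k)) : Prop :=
  ∀ e i, x e = some i → y e = some i

/-- `I_{[e,i]}`: the `k`-tuple with `{e}` in coordinate `i` and `∅` elsewhere. -/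
def ksingle {E : Type*} [DecidableEq E] {k : ℕ} (e : E) (i : Fin k) : E → Option (Fin k) :=
  fun e' => if e' = e then some i else none

/-- Marginal gain `Δ_{e,i} f(x) = f(x ⊔ I_{[e,i]}) - f(x)`. -/
def marg {E : Type*} [DecidableEq E] {k : ℕ} (f : (E → Option (Fin k)) → ℝ)
    (x : E → Option (Fin k)) (e : E) (i : Fin k) : ℝ :=
  f (ksup x (ksingle e i)) - f x

/-- `f` is `k`-submodular: `f(x⊔y) + f(x⊓y) ≤ f(x) + f(y)`. -/
def KSubmodular {E : Type*} {k : ℕ} (f : (E → Option (Fin k)) → ℝ) : Prop :=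
  ∀ x y, f (ksup x y) + f (kinf x y) ≤ f x + f y

/-- The support `P(x) = ⋃ᵢ Xᵢ` as a finset. -/
def suppK {E : Type*} [Fintype E] {k : ℕ} (x : E → Option (Fin k)) : Finset E :=
  Finset.univ.filter fun e => x e ≠ none

/-- Orthant submodularity. -/
def OrthantSubmodular {E : Type*} [DecidableEq E] {k : ℕ}
    (f : (E → Option (Fin k)) → ℝ) : Prop :=
  ∀ x y, kle x y → ∀ e, y e = none → ∀ i, marg f y e i ≤ marg f x e i

/-- Pairwise monotonicity. -/
def PairwiseMonotone {E : Type*} [DecidableEq E] {k : ℕ}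
    (f : (E → Option (Fin k)) → ℝ) : Prop :=
  ∀ x e, x e = none → ∀ i j : Fin k, i ≠ j → 0 ≤ marg f x e i + marg f x e j

/-- Monotonicity with respect to `⪯`. -/
def KMonotone {E : Type*} {k : ℕ} (f : (E → Option (Fin k)) → ℝ) : Prop :=
  ∀ x y, kle x y → f x ≤ f y

/-! k-submodularity implies orthant submodularity: applying the defining inequality to
`x ⊔ I_{[e,i]}` and `y ⪰ x` with `e ∉ P(y)` gives `Δ_{e,i} f(y) ≤ Δ_{e,i} f(x)`. Adding the
elements of `P(y) \ P(x)` to `x` one at a time, `f(y) - f(x)` telescopes into marginal gains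
taken at intermediate points `x' ⪰ x`, each of which is at most the gain at `x`. -/

section KSubmodularity

variable {E : Type*} {k : ℕ}

theorem kle.eq_none_of_eq_none {x y : E → Option (Fin k)} (hxy : kle x y) {e : E}
    (hye : y e = none) : x e = none := by
  cases hx : x e with
  | none => rfl
  | some j => simpa [hye] using hxy e j hx

theorem kle.eq_of_suppK_subset [Fintype E] {x y : E → Option (Fin k)} (hxy : kle x y)
    (hsupp : suppK y ⊆ suppK x) : x = y := by
  funext e
  cases hx : x e with
  | some j => exact (hxy e j hx).symm
  | none =>
    by_contra hy
    have : e ∈ suppK x := hsupp (by simpa [suppK] using Ne.symm hy)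
    simp [suppK, hx] at this

variable [DecidableEq E]

theorem kle_update_of_eq_none {x : E → Option (Fin k)} {e : E} (hxe : x e = none) (i : Fin k) :
    kle x (Function.update x e (some i)) := by
  intro e' j hj
  by_cases h : e' = e
  · simp [h, hxe] at hj
  · rwa [Function.update_of_ne h]

theorem kle.update_of_eq_some {x y : E → Option (Fin k)} (hxy : kle x y) {e : E} {i : Fin k}
    (hye : y e = some i) : kle (Function.update x e (some i)) y := by
  intro e' j hj
  by_cases h : e' = e
  · subst h
    rw [Function.update_self] at hj
    rw [hye, hj]
  · rw [Function.update_of_ne h] at hj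
    exact hxy e' j hj

theorem suppK_update_some [Fintype E] (x : E → Option (Fin k)) (e : E) (i : Fin k) :
    suppK (Function.update x e (some i)) = insert e (suppK x) := by
  ext e'
  by_cases h : e' = e <;> simp [suppK, h]

theorem ksup_ksingle_of_eq_none {x : E → Option (Fin k)} {e : E} (hxe : x e = none)
    (i : Fin k) : ksup x (ksingle e i) = Function.update x e (some i) := by
  funext e'
  by_cases h : e' = e
  · subst h
    simp [ksup, ksingle, hxe]
  · simp only [ksup, ksingle, if_neg h, Function.update_of_ne h]
    cases x e' <;> rfl

theorem marg_of_eq_none (f : (E → Option (Fin k)) → ℝ) {x : E → Option (Fin k)} {e : E}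
    (hxe : x e = none) (i : Fin k) : marg f x e i = f (Function.update x e (some i)) - f x := by
  rw [marg, ksup_ksingle_of_eq_none hxe]

theorem ksup_update_of_kle {x y : E → Option (Fin k)} (hxy : kle x y) {e : E}
    (hye : y e = none) (i : Fin k) :
    ksup (Function.update x e (some i)) y = Function.update y e (some i) := by
  funext e'
  by_cases h : e' = e
  · subst h
    simp [ksup, hye]
  · simp only [ksup, Function.update_of_ne h]
    cases hx : x e' with
    | none => cases y e' <;> rfl
    | some j => simp [hxy e' j hx]

theorem kinf_update_of_kle {x y : E → Option (Fin k)} (hxy : kle x y) {e : E}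
    (hye : y e = none) (i : Fin k) : kinf (Function.update x e (some i)) y = x := by
  funext e'
  by_cases h : e' = e
  · subst h
    simp [kinf, hye, hxy.eq_none_of_eq_none hye]
  · simp only [kinf, Function.update_of_ne h]
    cases hx : x e' with
    | none => cases y e' <;> rfl
    | some j => simp [hxy e' j hx]

theorem KSubmodular.orthantSubmodular {f : (E → Option (Fin k)) → ℝ} (hf : KSubmodular f) :
    OrthantSubmodular f := by
  intro x y hxy e hye i
  have key := hf (Function.update x e (some i)) y
  rw [ksup_update_of_kle hxy hye, kinf_update_of_kle hxy hye] at key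
  rw [marg_of_eq_none f hye, marg_of_eq_none f (hxy.eq_none_of_eq_none hye)]
  linarith

theorem OrthantSubmodular.elim_marg_le {f : (E → Option (Fin k)) → ℝ}
    (hf : OrthantSubmodular f) {x x' : E → Option (Fin k)} (hxx' : kle x x') {e : E}
    (hx'e : x' e = none) (o : Option (Fin k)) :
    o.elim 0 (fun i => marg f x' e i) ≤ o.elim 0 (fun i => marg f x e i) := by
  cases o with
  | none => rfl
  | some i => exact hf x x' hxx' e hx'e i

theorem OrthantSubmodular.sub_le_sum_marg [Fintype E] {f : (E → Option (Fin k)) → ℝ}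
    (hf : OrthantSubmodular f) {x y : E → Option (Fin k)} (hxy : kle x y) :
    f y - f x ≤ ∑ e ∈ suppK y \ suppK x, (y e).elim 0 (fun i => marg f x e i) := by
  suffices ∀ S x, kle x y → suppK y \ suppK x = S →
      f y - f x ≤ ∑ e ∈ S, (y e).elim 0 (fun i => marg f x e i) from this _ x hxy rfl
  intro S
  induction S using Finset.induction_on with
  | empty =>
    intro x hxy hS
    rw [hxy.eq_of_suppK_subset (Finset.sdiff_eq_empty_iff_subset.mp hS)]
    simp
  | insert e T heT ih =>
    intro x hxy hS
    have he : e ∈ suppK y \ suppK x := hS ▸ Finset.mem_insert_self e T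
    obtain ⟨hey, hex⟩ := Finset.mem_sdiff.mp he
    obtain ⟨i, hi⟩ := Option.ne_none_iff_exists'.mp (Finset.mem_filter.mp hey).2
    have hxe : x e = none := by simpa [suppK] using hex
    set x' := Function.update x e (some i)
    have hT : suppK y \ suppK x' = T := by
      rw [suppK_update_some, Finset.sdiff_insert, hS, Finset.erase_insert heT]
    have hx'T : ∀ e' ∈ T, x' e' = none := by
      intro e' he'
      rw [← hT, Finset.mem_sdiff] at he'
      simpa [suppK] using he'.2
    calc f y - f x = (f y - f x') + marg f x e i := by rw [marg_of_eq_none f hxe]; ring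
      _ ≤ ∑ e' ∈ T, (y e').elim 0 (fun j => marg f x' e' j) + marg f x e i := by
        gcongr
        exact ih x' (hxy.update_of_eq_some hi) hT
      _ ≤ ∑ e' ∈ T, (y e').elim 0 (fun j => marg f x e' j) + marg f x e i := by
        gcongr with e' he'
        exact hf.elim_marg_le (kle_update_of_eq_none hxe i) (hx'T e' he') _
      _ = ∑ e' ∈ insert e T, (y e').elim 0 (fun j => marg f x e' j) := by
        rw [Finset.sum_insert heT, hi, add_comm]
        rfl

end KSubmodularity

theorem stmt_3_general {E : Type*} [Fintype E] [DecidableEq E] {k : ℕ}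
    (f : (E → Option (Fin k)) → ℝ) (hf : KSubmodular f)
    (x y : E → Option (Fin k)) (hxy : kle x y) :
    f y - f x ≤ ∑ e ∈ suppK y \ suppK x, (y e).elim 0 (fun i => marg f x e i) :=
  hf.orthantSubmodular.sub_le_sum_marg hxy

theorem stmt_3 {E : Type*} [Fintype E] [DecidableEq E] {k : ℕ}
    (f : (E → Option (Fin k)) → ℝ) (hf : KSubmodular f) (hnn : ∀ x, 0 ≤ f x)
    (x y : E → Option (Fin k)) (hxy : kle x y) :
    f y - f x ≤ ∑ e ∈ suppK y \ suppK x, (y e).elim 0 (fun i => marg f x e i) :=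
  stmt_3_general f hf x y hxy
end

section
/- Let f be k-submodular and nonnegative with f(∅) ≥ 0. Let q⁰ = ∅, and let q¹ ⪯ q² ⪯ ⋯ ⪯ q^w be a chain in (k+1)^E where each q^j adds one element to q^{j-1} so as to maximize f(q^{j-1} ⊔ I_{[e,i]}) over remaining e ∈ P(o) \ P(q^{j-1}) and i ∈ [k], for some fixed o ∈ (k+1)^E with P(q^w) ⊆ P(o). Then for any e' ∈ P(o) \ P(q^w) and any j ∈ [k] and any y ⪰ q^w with e' ∉ P(y): Δ_{e',j} f(y) ≤ (1/w)·f(q^w). -/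
open Finset

/-! Each greedy step `q (l+1)` does at least as well as adding `(e', j)` to `q l`, and orthant
submodularity (a consequence of `k`-submodularity) bounds the gain of `(e', j)` at `y ⪰ q l` by its
gain at `q l`. So `Δ_{e',j} f(y) ≤ f(q (l+1)) - f(q l)` for every `l < w`, and summing over `l`
telescopes to `w • Δ_{e',j} f(y) ≤ f(q w) - f(q 0) ≤ f(q w)`. -/

theorem mul_le_sub_of_le_forward_diff {g : ℕ → ℝ} {c : ℝ} {w : ℕ}
    (h : ∀ l < w, c ≤ g (l + 1) - g l) : w * c ≤ g w - g 0 := by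
  calc (w : ℝ) * c = ∑ _l ∈ range w, c := by simp
    _ ≤ ∑ l ∈ range w, (g (l + 1) - g l) := sum_le_sum fun l hl => h l (mem_range.mp hl)
    _ = g w - g 0 := sum_range_sub g w

section Lattice

variable {E : Type*} {k : ℕ}

theorem kle_refl (x : E → Option (Fin k)) : kle x x := fun _ _ h => h

theorem kle_trans {x y z : E → Option (Fin k)} (hxy : kle x y) (hyz : kle y z) : kle x z :=
  fun e i h => hyz e i (hxy e i h)

theorem kle.eq_none {x y : E → Option (Fin k)} (h : kle x y) {e : E} (hy : y e = none) :
    x e = none := by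
  cases hx : x e with
  | none => rfl
  | some i => simp [h e i hx] at hy

theorem notMem_suppK [Fintype E] {x : E → Option (Fin k)} {e : E} :
    e ∉ suppK x ↔ x e = none := by
  simp [suppK]

theorem kle_of_chain {q : ℕ → E → Option (Fin k)} {w : ℕ}
    (hq : ∀ l < w, kle (q l) (q (l + 1))) {l : ℕ} (hl : l ≤ w) : kle (q l) (q w) := by
  induction w, hl using Nat.le_induction with
  | base => exact kle_refl _
  | succ n hln ih =>
    exact kle_trans (ih fun m hm => hq m (by omega)) (hq n (by omega))

variable [DecidableEq E]

theorem ksup_ksingle_self {x : E → Option (Fin k)} {e : E} (hx : x e = none) (i : Fin k) :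
    ksup x (ksingle e i) e = some i := by
  simp [ksup, ksingle, hx]

theorem ksup_ksingle_of_ne (x : E → Option (Fin k)) {e e' : E} (i : Fin k) (h : e' ≠ e) :
    ksup x (ksingle e i) e' = x e' := by
  cases hx : x e' <;> simp [ksup, ksingle, hx, h]

theorem kle_ksup_ksingle {x : E → Option (Fin k)} {e : E} (hx : x e = none) (i : Fin k) :
    kle x (ksup x (ksingle e i)) := by
  intro e' i' h
  have he : e' ≠ e := by rintro rfl; simp [hx] at h
  rwa [ksup_ksingle_of_ne x i he]

theorem ksup_ksup_ksingle_of_kle {x y : E → Option (Fin k)} (hxy : kle x y) {e : E}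
    (hy : y e = none) (i : Fin k) :
    ksup (ksup x (ksingle e i)) y = ksup y (ksingle e i) := by
  funext e'
  by_cases he : e' = e
  · subst he
    simp [ksup, ksingle, hy, hxy.eq_none hy]
  · rw [ksup_ksingle_of_ne y i he]
    cases hx : x e' with
    | none => simp [ksup, ksingle, hx, he]
    | some i' => simp [ksup, ksingle, hx, he, hxy e' i' hx]

theorem kinf_ksup_ksingle_of_kle {x y : E → Option (Fin k)} (hxy : kle x y) {e : E}
    (hy : y e = none) (i : Fin k) :
    kinf (ksup x (ksingle e i)) y = x := by
  funext e'
  by_cases he : e' = e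
  · subst he
    simp [kinf, ksup_ksingle_self (hxy.eq_none hy), hy, hxy.eq_none hy]
  · rw [show kinf (ksup x (ksingle e i)) y e' = kinf x y e' by
      simp only [kinf, ksup_ksingle_of_ne x i he]]
    cases hx : x e' with
    | none => simp [kinf, hx]
    | some i' => simp [kinf, hx, hxy e' i' hx]

end Lattice

theorem OrthantSubmodular.marg_le_of_le {E : Type*} [DecidableEq E] {k : ℕ}
    {f : (E → Option (Fin k)) → ℝ} (hf : OrthantSubmodular f) {x y : E → Option (Fin k)}
    (hxy : kle x y) {e : E} (hy : y e = none) {i : Fin k} {b : ℝ}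
    (hb : f (ksup x (ksingle e i)) ≤ b) : marg f y e i ≤ b - f x := by
  calc marg f y e i ≤ marg f x e i := hf x y hxy e hy i
    _ ≤ b - f x := sub_le_sub_right hb _

theorem kle_succ_of_greedy_step {E : Type*} [Fintype E] [DecidableEq E] {k w : ℕ}
    {o : E → Option (Fin k)} {q : ℕ → E → Option (Fin k)}
    (hstep : ∀ j, 1 ≤ j → j ≤ w → ∃ e ∈ suppK o \ suppK (q (j - 1)), ∃ i : Fin k,
      q j = ksup (q (j - 1)) (ksingle e i))
    {l : ℕ} (hl : l < w) : kle (q l) (q (l + 1)) := by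
  obtain ⟨e, he, i, hq⟩ := hstep (l + 1) (by omega) (by omega)
  rw [Nat.add_sub_cancel] at he hq
  rw [hq]
  exact kle_ksup_ksingle (notMem_suppK.mp (mem_sdiff.mp he).2) i

theorem stmt_7_general {E : Type*} [Fintype E] [DecidableEq E] {k w : ℕ}
    (hw : 0 < w)
    (f : (E → Option (Fin k)) → ℝ) (hf : KSubmodular f) (hnn : ∀ x, 0 ≤ f x)
    (o : E → Option (Fin k)) (q : ℕ → (E → Option (Fin k)))
    (hstep : ∀ j, 1 ≤ j → j ≤ w → ∃ e ∈ suppK o \ suppK (q (j - 1)), ∃ i : Fin k,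
      q j = ksup (q (j - 1)) (ksingle e i))
    (hgreedy : ∀ j, 1 ≤ j → j ≤ w →
      ∀ e ∈ suppK o \ suppK (q (j - 1)), ∀ i : Fin k,
        f (ksup (q (j - 1)) (ksingle e i)) ≤ f (q j)) :
    ∀ e' ∈ suppK o \ suppK (q w), ∀ j : Fin k,
      ∀ y : E → Option (Fin k), kle (q w) y → y e' = none →
        marg f y e' j ≤ f (q w) / w := by
  intro e' he' j y hy hye
  obtain ⟨he'o, he'w⟩ := mem_sdiff.mp he'
  have hchain : ∀ l ≤ w, kle (q l) (q w) :=
    fun _ hl => kle_of_chain (q := q) (fun _ hm => kle_succ_of_greedy_step hstep hm) hl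
  have hgain : ∀ l < w, marg f y e' j ≤ f (q (l + 1)) - f (q l) := by
    intro l hl
    have hql : e' ∉ suppK (q l) :=
      notMem_suppK.mpr ((hchain l hl.le).eq_none (notMem_suppK.mp he'w))
    have hg := hgreedy (l + 1) (by omega) (by omega) e'
      (by simpa using mem_sdiff.mpr ⟨he'o, hql⟩) j
    rw [Nat.add_sub_cancel] at hg
    exact hf.orthantSubmodular.marg_le_of_le (kle_trans (hchain l hl.le) hy) hye hg
  rw [le_div_iff₀ (by exact_mod_cast hw), mul_comm]
  linarith [mul_le_sub_of_le_forward_diff (g := fun l => f (q l)) hgain, hnn (q 0)]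

theorem stmt_7 {E : Type*} [Fintype E] [DecidableEq E] {k w : ℕ}
    (hk : 0 < k) (hw : 0 < w)
    (f : (E → Option (Fin k)) → ℝ) (hf : KSubmodular f) (hnn : ∀ x, 0 ≤ f x)
    (o : E → Option (Fin k)) (q : ℕ → (E → Option (Fin k)))
    (hq0 : q 0 = fun _ => none)
    (hstep : ∀ j, 1 ≤ j → j ≤ w → ∃ e ∈ suppK o \ suppK (q (j - 1)), ∃ i : Fin k,
      q j = ksup (q (j - 1)) (ksingle e i))
    (hgreedy : ∀ j, 1 ≤ j → j ≤ w →
      ∀ e ∈ suppK o \ suppK (q (j - 1)), ∀ i : Fin k,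
        f (ksup (q (j - 1)) (ksingle e i)) ≤ f (q j))
    (hsub : suppK (q w) ⊆ suppK o) :
    ∀ e' ∈ suppK o \ suppK (q w), ∀ j : Fin k,
      ∀ y : E → Option (Fin k), kle (q w) y → y e' = none →
        marg f y e' j ≤ f (q w) / w :=
  stmt_7_general hw f hf hnn o q hstep hgreedy
end

section
/- Suppose nonnegative reals g₀ = 0 ≤ g₁ ≤ ⋯ ≤ g_p and positive reals θ₁ ≥ θ₂ ≥ ⋯ ≥ θ_p and positive integers c₁, …, c_p satisfy g_t = ∑_{τ=1}^{t} c_τ θ_τ for all t, and suppose G ≥ 0 and L'' > 0 satisfy G ≤ 2(g_t + (L''/2)·θ_{t+1}) for every t = 0, …, p-1, where L'' ≤ ∑_{τ=1}^p c_τ. Then g_p ≥ (1/2)(1 - e^{-2}) · G. -/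
/-!
Write `r_t = G/2 - g_t` for the gap to half the target. The hypothesis at `t` says
`θ_{t+1} ≥ 2 r_t / L''`, so adding the `c_{t+1}` copies of `θ_{t+1}` gives
`r_{t+1}⁺ ≤ r_t⁺ (1 - 2 c_{t+1} / L'') ≤ r_t⁺ exp(-2 c_{t+1} / L'')`. Iterating,
`r_p⁺ ≤ (G/2) exp(-2 L' / L'') ≤ (G/2) e⁻²` because `L'' ≤ L'`.
The positive part absorbs the case in which `g_t` has already passed `G/2`.
-/

open Finset Real

lemma posPart_sub_mul_le_mul_exp {r c θ κ : ℝ} (hc : 0 ≤ c) (hθ : 0 ≤ θ) (hκ : κ * r ≤ θ) :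
    (r - c * θ)⁺ ≤ r⁺ * exp (-(κ * c)) := by
  have hθ' : κ * r⁺ ≤ θ := by
    rcases le_total 0 r with hr | hr
    · rwa [posPart_of_nonneg hr]
    · simpa [posPart_eq_zero.mpr hr] using hθ
  have hexp : 1 - κ * c ≤ exp (-(κ * c)) := by linarith [add_one_le_exp (-(κ * c))]
  have hr₀ := posPart_nonneg r
  rw [posPart_def]
  refine max_le ?_ (by positivity)
  calc r - c * θ ≤ r⁺ - c * (κ * r⁺) := by
        linarith [le_posPart r, mul_le_mul_of_nonneg_left hθ' hc]
    _ = r⁺ * (1 - κ * c) := by ring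
    _ ≤ r⁺ * exp (-(κ * c)) := mul_le_mul_of_nonneg_left hexp hr₀

lemma le_mul_exp_neg_sum_Icc {f a : ℕ → ℝ} {n : ℕ}
    (hstep : ∀ t < n, f (t + 1) ≤ f t * exp (-a (t + 1))) :
    f n ≤ f 0 * exp (-∑ τ ∈ Icc 1 n, a τ) := by
  induction n with
  | zero => simp
  | succ n ih =>
    calc f (n + 1) ≤ f n * exp (-a (n + 1)) := hstep n n.lt_succ_self
      _ ≤ f 0 * exp (-∑ τ ∈ Icc 1 n, a τ) * exp (-a (n + 1)) :=
        mul_le_mul_of_nonneg_right (ih fun t ht => hstep t (ht.trans n.lt_succ_self))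
          (exp_pos _).le
      _ = f 0 * exp (-∑ τ ∈ Icc 1 (n + 1), a τ) := by
        rw [sum_Icc_succ_top (by omega), mul_assoc, ← exp_add, neg_add]

theorem stmt_11_general (p : ℕ) (c : ℕ → ℕ) (θ : ℕ → ℝ)
    (hθ : ∀ τ, 1 ≤ τ → τ ≤ p → 0 < θ τ)
    (G L'' : ℝ) (hG : 0 ≤ G) (hL : 0 < L'')
    (hLle : L'' ≤ ∑ τ ∈ Finset.Icc 1 p, (c τ : ℝ))
    (hkey : ∀ t, t < p →
      G ≤ 2 * ((∑ τ ∈ Finset.Icc 1 t, (c τ : ℝ) * θ τ) + (L'' / 2) * θ (t + 1))) :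
    (∑ τ ∈ Finset.Icc 1 p, (c τ : ℝ) * θ τ) ≥ (1 / 2) * (1 - Real.exp (-2)) * G := by
  set g : ℕ → ℝ := fun t => ∑ τ ∈ Icc 1 t, (c τ : ℝ) * θ τ
  have hgap : ∀ t < p, (G / 2 - g (t + 1))⁺ ≤ (G / 2 - g t)⁺ * exp (-(2 / L'' * c (t + 1))) := by
    intro t ht
    have hsplit : G / 2 - g (t + 1) = G / 2 - g t - c (t + 1) * θ (t + 1) := by
      simp only [g, sum_Icc_succ_top (by omega : 1 ≤ t + 1)]
      ring
    have hθt : 2 / L'' * (G / 2 - g t) ≤ θ (t + 1) := by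
      rw [div_mul_eq_mul_div, div_le_iff₀ hL]
      linarith [hkey t ht]
    rw [hsplit]
    exact posPart_sub_mul_le_mul_exp (Nat.cast_nonneg _) (hθ _ (by omega) ht).le hθt
  have hfinal : (G / 2 - g p)⁺ ≤ (G / 2 - g 0)⁺ * exp (-∑ τ ∈ Icc 1 p, 2 / L'' * (c τ : ℝ)) :=
    le_mul_exp_neg_sum_Icc (f := fun t => (G / 2 - g t)⁺) (a := fun τ => 2 / L'' * (c τ : ℝ)) hgap
  have hexp : exp (-∑ τ ∈ Icc 1 p, 2 / L'' * (c τ : ℝ)) ≤ exp (-2) := by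
    rw [exp_le_exp, ← mul_sum, neg_le_neg_iff, div_mul_eq_mul_div, le_div_iff₀ hL]
    linarith
  have hg0 : g 0 = 0 := by simp [g]
  rw [hg0, sub_zero, posPart_of_nonneg (a := G / 2) (by linarith)] at hfinal
  show g p ≥ _
  linarith [le_posPart (G / 2 - g p), mul_le_mul_of_nonneg_left hexp (by linarith : 0 ≤ G / 2)]

theorem stmt_11 (p : ℕ) (hp : 0 < p) (c : ℕ → ℕ) (θ : ℕ → ℝ)
    (hc : ∀ τ, 1 ≤ τ → τ ≤ p → 0 < c τ)
    (hθ : ∀ τ, 1 ≤ τ → τ ≤ p → 0 < θ τ)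
    (hθmono : ∀ τ, 1 ≤ τ → τ < p → θ (τ + 1) ≤ θ τ)
    (G L'' : ℝ) (hG : 0 ≤ G) (hL : 0 < L'')
    (hLle : L'' ≤ ∑ τ ∈ Finset.Icc 1 p, (c τ : ℝ))
    (hkey : ∀ t, t < p →
      G ≤ 2 * ((∑ τ ∈ Finset.Icc 1 t, (c τ : ℝ) * θ τ) + (L'' / 2) * θ (t + 1))) :
    (∑ τ ∈ Finset.Icc 1 p, (c τ : ℝ) * θ τ) ≥ (1 / 2) * (1 - Real.exp (-2)) * G :=
  stmt_11_general p c θ hθ G L'' hG hL hLle hkey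
end

section
/- Suppose real numbers satisfy: f_s ≥ f₀ + γ·g for some γ ∈ [0,1] with g ≥ 0, and (c)·f₀ ≥ F - g where c = (2w+1)/w for a positive integer w. Then f_s ≥ min{w/(2w+1), γ}·F, provided F ≥ g ≥ 0 and f₀ ≥ 0. -/
/-! Put `c = w / (2w + 1)`. The second hypothesis says `f0 ≥ c (F - g)`, so
`fs ≥ c (F - g) + γ g`, and splitting `F = (F - g) + g` into two nonnegative parts bounds this
below by `min c γ · F`. -/

lemma min_mul_add_le_add_mul {a b x y : ℝ} (hx : 0 ≤ x) (hy : 0 ≤ y) :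
    min a b * (x + y) ≤ a * x + b * y := by
  rw [mul_add]
  gcongr
  · exact min_le_left a b
  · exact min_le_right a b

lemma div_mul_le_of_le_div_mul {a b x y : ℝ} (ha : 0 < a) (hb : 0 < b) (h : x ≤ b / a * y) :
    a / b * x ≤ y :=
  calc a / b * x ≤ a / b * (b / a * y) := by gcongr
    _ = y := by field_simp

theorem stmt_19_general (fs f0 g F γ : ℝ) (w : ℕ) (hw : 1 ≤ w)
    (hg : 0 ≤ g)
    (hgF : g ≤ F)
    (h1 : f0 + γ * g ≤ fs)
    (h2 : F - g ≤ ((2 * w + 1) / w) * f0) :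
    min ((w : ℝ) / (2 * w + 1)) γ * F ≤ fs := by
  have hw_pos : (0 : ℝ) < w := Nat.cast_pos.mpr hw
  have hf0 : (w : ℝ) / (2 * w + 1) * (F - g) ≤ f0 :=
    div_mul_le_of_le_div_mul hw_pos (by positivity) h2
  calc min ((w : ℝ) / (2 * w + 1)) γ * F
      = min ((w : ℝ) / (2 * w + 1)) γ * ((F - g) + g) := by ring
    _ ≤ (w : ℝ) / (2 * w + 1) * (F - g) + γ * g :=
      min_mul_add_le_add_mul (sub_nonneg.mpr hgF) hg
    _ ≤ fs := by linarith

theorem stmt_19 (fs f0 g F γ : ℝ) (w : ℕ) (hw : 1 ≤ w)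
    (hγ0 : 0 ≤ γ) (hγ1 : γ ≤ 1) (hg : 0 ≤ g) (hf0 : 0 ≤ f0)
    (hF : 0 ≤ F) (hgF : g ≤ F)
    (h1 : f0 + γ * g ≤ fs)
    (h2 : F - g ≤ ((2 * w + 1) / w) * f0) :
    min ((w : ℝ) / (2 * w + 1)) γ * F ≤ fs :=
  stmt_19_general fs f0 g F γ w hw hg hgF h1 h2
end
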